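/- arXiv:1101.5961 — 2 statements merged into one kernel-verified Lean document; each statement's English description precedes it below -/
import Mathlib

section
/- Let τ be a 2-positive unital map on a C*-algebra A with invariant state φ. If φ(τ^n(x*)τ^n(x)) → |φ(x)|² for all x ∈ A (Kolmogorov property), then φ(τ^n(x*)y) → φ(x*)φ(y) for all x, y ∈ A (strong mixing). -/
/-!
Put `bₙ = τⁿ x - φ(x) • 1`. Invariance of `φ` turns the Kolmogorov property into
`φ(bₙ* bₙ) → 0`, i.e. `bₙ → 0` in the GNS space of `φ`, so `φ(bₙ* y) = ⟪bₙ, y⟫ → 0` by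
Cauchy–Schwarz. Since a positive map on a C⋆-algebra commutes with `*`, `φ(bₙ* y)` is
`φ(τⁿ(x*) y) - φ(x*) φ(y)`.
-/

open Filter Topology
open scoped ComplexOrder

lemma map_nonneg_of_map_star_mul_self_nonneg {A B F : Type*} [NonUnitalSemiring A] [StarRing A]
    [PartialOrder A] [StarOrderedRing A] [AddCommMonoid B] [PartialOrder B]
    [IsOrderedAddMonoid B] [FunLike F A B] [AddMonoidHomClass F A B] (f : F)
    (hf : ∀ s : A, 0 ≤ f (star s * s)) {a : A} (ha : 0 ≤ a) : 0 ≤ f a := by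
  rw [StarOrderedRing.nonneg_iff] at ha
  induction ha using AddSubmonoid.closure_induction with
  | mem x hx => obtain ⟨s, rfl⟩ := hx; exact hf s
  | zero => simp
  | add x y _ _ hx hy => rw [map_add]; exact add_nonneg hx hy

lemma Module.End.pow_apply_nonneg {R A : Type*} [Semiring R] [AddCommMonoid A] [PartialOrder A]
    [Module R A] {τ : Module.End R A} (hτ : ∀ x, 0 ≤ x → 0 ≤ τ x) (n : ℕ) {x : A}
    (hx : 0 ≤ x) : 0 ≤ (τ ^ n) x := by
  induction n with
  | zero => exact hx
  | succ n ih => rw [pow_succ', Module.End.mul_apply]; exact hτ _ ih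

namespace PositiveLinearMap

section NonUnital

variable {A : Type*} [NonUnitalCStarAlgebra A] [PartialOrder A] [StarOrderedRing A]

lemma tendsto_apply_star_mul_zero_of_tendsto_apply_star_mul_self_zero (ω : A →ₚ[ℂ] ℂ)
    {b : ℕ → A} (hb : Tendsto (fun n => ω (star (b n) * b n)) atTop (𝓝 0)) (y : A) :
    Tendsto (fun n => ω (star (b n) * y)) atTop (𝓝 0) := by
  have hnorm : Tendsto (fun n => ω.toPreGNS (b n)) atTop (𝓝 0) := by
    rw [tendsto_zero_iff_norm_tendsto_zero]
    simp only [preGNS_norm_def, ofPreGNS_toPreGNS]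
    exact ((Real.continuous_sqrt.comp Complex.continuous_re).tendsto' 0 0 (by simp)).comp hb
  have h := hnorm.inner (𝕜 := ℂ) (tendsto_const_nhds (x := ω.toPreGNS y))
  rw [inner_zero_left] at h
  -- the GNS inner product `⟪a, b⟫` is `ω (star a * b)` by definition
  exact h

end NonUnital

section Unital

variable {A : Type*} [CStarAlgebra A] [PartialOrder A] [StarOrderedRing A]

lemma tendsto_apply_star_mul_of_tendsto_apply_star_mul_self (ω : A →ₚ[ℂ] ℂ) (hω1 : ω 1 = 1)
    {u : ℕ → A} {c : ℂ} (hu : ∀ n, ω (u n) = c)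
    (huu : Tendsto (fun n => ω (star (u n) * u n)) atTop (𝓝 (star c * c))) (y : A) :
    Tendsto (fun n => ω (star (u n) * y)) atTop (𝓝 (star c * ω y)) := by
  have hstar (n : ℕ) : ω (star (u n)) = star c := by rw [map_star, hu]
  have hvar (n : ℕ) : ω (star (u n - c • 1) * (u n - c • 1)) =
      ω (star (u n) * u n) - star c * c := by
    simp only [star_sub, star_smul, star_one, sub_mul, mul_sub, smul_mul_assoc, mul_smul_comm,
      one_mul, mul_one, map_sub, map_smul, smul_eq_mul, hu, hstar, hω1]
    ring
  have hcov (n : ℕ) : ω (star (u n - c • 1) * y) = ω (star (u n) * y) - star c * ω y := by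
    simp only [star_sub, star_smul, star_one, sub_mul, smul_mul_assoc, one_mul, map_sub,
      map_smul, smul_eq_mul]
  have h := tendsto_apply_star_mul_zero_of_tendsto_apply_star_mul_self_zero ω
    (b := fun n => u n - c • 1)
    (by simpa only [hvar, sub_self] using huu.sub_const (star c * c)) y
  simpa only [hcov, tendsto_sub_nhds_zero_iff] using h

end Unital

end PositiveLinearMap

theorem stmt3_general {A : Type*} [NormedRing A] [StarRing A] [CStarRing A]
    [PartialOrder A] [StarOrderedRing A]
    [NormedAlgebra ℂ A] [StarModule ℂ A] [CompleteSpace A]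
    (φ : A →ₗ[ℂ] ℂ) (hφ1 : φ 1 = 1) (hφpos : ∀ x : A, 0 ≤ φ (star x * x))
    (τ : Module.End ℂ A) (hτpos : ∀ x : A, 0 ≤ x → 0 ≤ τ x)
    (hinv : ∀ x : A, φ (τ x) = φ x)
    (hKol : ∀ x : A, Tendsto (fun n : ℕ => φ ((τ ^ n) (star x) * (τ ^ n) x)) atTop
      (𝓝 (star (φ x) * φ x))) :
    ∀ x y : A, Tendsto (fun n : ℕ => φ ((τ ^ n) (star x) * y)) atTop
      (𝓝 (φ (star x) * φ y)) := by
  let _ : CStarAlgebra A := {}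
  intro x y
  let ω : A →ₚ[ℂ] ℂ := .mk₀ φ fun _ => map_nonneg_of_map_star_mul_self_nonneg φ hφpos
  have hτ_star (n : ℕ) : (τ ^ n) (star x) = star ((τ ^ n) x) :=
    map_star (PositiveLinearMap.mk₀ (τ ^ n) fun _ => τ.pow_apply_nonneg hτpos n) x
  have hφ_inv (n : ℕ) : φ ((τ ^ n) x) = φ x := by
    induction n with
    | zero => rfl
    | succ n ih => rw [pow_succ', Module.End.mul_apply, hinv, ih]
  have hKol_x := hKol x
  rw [show φ (star x) = star (φ x) from map_star ω x]
  simp only [hτ_star] at hKol_x ⊢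
  exact ω.tendsto_apply_star_mul_of_tendsto_apply_star_mul_self hφ1 hφ_inv hKol_x y

/-- Let `τ` be a 2-positive (Kadison–Schwarz) unital map on a C*-algebra `A` with invariant
state `φ`.  If `φ(τⁿ(x*)τⁿ(x)) → |φ(x)|²` for all `x` (Kolmogorov property), then
`φ(τⁿ(x*)y) → φ(x*)φ(y)` for all `x, y` (strong mixing). -/
theorem stmt3 {A : Type*} [NormedRing A] [StarRing A] [CStarRing A]
    [PartialOrder A] [StarOrderedRing A]
    [NormedAlgebra ℂ A] [StarModule ℂ A] [CompleteSpace A]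
    (φ : A →ₗ[ℂ] ℂ) (hφ1 : φ 1 = 1) (hφpos : ∀ x : A, 0 ≤ φ (star x * x))
    (τ : Module.End ℂ A) (hτ1 : τ 1 = 1) (hτpos : ∀ x : A, 0 ≤ x → 0 ≤ τ x)
    (hKS : ∀ y : A, star (τ y) * τ y ≤ τ (star y * y))
    (hinv : ∀ x : A, φ (τ x) = φ x)
    (hKol : ∀ x : A, Tendsto (fun n : ℕ => φ ((τ ^ n) (star x) * (τ ^ n) x)) atTop
      (𝓝 (star (φ x) * φ x))) :
    ∀ x y : A, Tendsto (fun n : ℕ => φ ((τ ^ n) (star x) * y)) atTop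
      (𝓝 (φ (star x) * φ y)) :=
  stmt3_general φ hφ1 hφpos τ hτpos hinv hKol
end

section
/- Let ω be a translation-invariant state on B = ⊗_{ℤ^k} M_d(ℂ) and E the support projection of ω in π_ω(B_{≥0})'' where B_{≥0} is the algebra over the positive cone. Then θ_n(E) ≥ E for every n in the positive cone ℤ₊^k. -/
open scoped ComplexOrder

/-- Let `ω` be a translation invariant state on the spin algebra over the lattice `ℤ^k`
(`θ` the translation action) and let `E` be the support projection of `ω` in the
(weak closure of the) half-space algebra `B₀`.  Then `θ_n(E) ≥ E` for every `n` in the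
positive cone `ℤ₊^k`. -/
theorem stmt14 {A : Type*} [NormedRing A] [StarRing A] [CStarRing A]
    [PartialOrder A] [StarOrderedRing A]
    [NormedAlgebra ℂ A] [StarModule ℂ A] [CompleteSpace A]
    (k : ℕ)
    (θ : (Fin k → ℤ) → (A ≃⋆ₐ[ℂ] A))
    (hθ : ∀ (m n : Fin k → ℤ) (x : A), θ (m + n) x = θ m (θ n x))
    (ω : A →ₗ[ℂ] ℂ) (hω1 : ω 1 = 1) (hωpos : ∀ x : A, 0 ≤ ω (star x * x))
    (hinv : ∀ (n : Fin k → ℤ) (x : A), ω (θ n x) = ω x)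
    (B₀ : StarSubalgebra ℂ A)
    (hBinv : ∀ n : Fin k → ℤ, 0 ≤ n → ∀ x ∈ B₀, θ n x ∈ B₀)
    (E : A) (hE : E ∈ B₀) (hEidem : IsIdempotentElem E) (hEsa : IsSelfAdjoint E)
    (hωE : ω E = 1)
    (hsupp : ∀ x ∈ B₀, ω (E * x * E) = ω x)
    (hmin : ∀ Q ∈ B₀, IsIdempotentElem Q → IsSelfAdjoint Q → ω Q = 1 → E ≤ Q) :
    ∀ n : Fin k → ℤ, 0 ≤ n → E ≤ θ n E := by
  intro n hn
  refine hmin _ (hBinv n hn E hE) ?_ ?_ ?_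
  · show θ n E * θ n E = θ n E
    rw [← map_mul, hEidem]
  · show star (θ n E) = θ n E
    rw [← map_star, hEsa]
  · rw [hinv, hωE]
end
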